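/- Let n ≥ 2 be an integer. Let F be a homeomorphism of ℝ² satisfying F(x + P) = F(x) + P for all x ∈ ℝ² and P ∈ ℤ², and let H be a homeomorphism of ℝ² for which there is a matrix A ∈ GL(2, ℤ) with H(x + P) = H(x) + A·P for all x ∈ ℝ² and P ∈ ℤ². Assume there is an integer vector P₀ ∈ ℤ² such that H ∘ F ∘ H⁻¹(x) = Fⁿ(x) + P₀ for all x ∈ ℝ². Then the rotation set ρ(F) is a single point with rational coordinates: there exists v ∈ ℚ² with ρ(F) = {v}. -/

import Mathlib

open Filter Topology

/-- The rotation set of a map `G : ℝ² → ℝ²` (commuting with integer translations):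
the set of vectors `v` for which there are points `xᵢ` and positive integers `mᵢ → ∞`
with `(G^{mᵢ}(xᵢ) − xᵢ)/mᵢ → v`. -/
def rotSet (G : ℝ × ℝ → ℝ × ℝ) : Set (ℝ × ℝ) :=
  {v | ∃ (x : ℕ → ℝ × ℝ) (m : ℕ → ℕ), (∀ i, 0 < m i) ∧ Tendsto m atTop atTop ∧
    Tendsto (fun i => ((m i : ℝ))⁻¹ • (G^[m i] (x i) - x i)) atTop (nhds v)}

/-- The linear action of an integer 2×2 matrix on `ℝ²`. -/
def matAct (A : Matrix (Fin 2) (Fin 2) ℤ) (v : ℝ × ℝ) : ℝ × ℝ :=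
  ((A 0 0 : ℝ) * v.1 + (A 0 1 : ℝ) * v.2, (A 1 0 : ℝ) * v.1 + (A 1 1 : ℝ) * v.2)

/-!
Write `ρ = rotSet F`. Up to bounded errors `H` acts linearly by `A`, so conjugating by `H` gives
`A ρ = rotSet (Fⁿ + P₀) = n ρ + P₀`: the set `ρ` is invariant under `v ↦ (A v - P₀) / n`. Since
`n ∤ det A`, `n` is not an eigenvalue of `A`, so this affine map has a unique fixed point `v₀`,
which is rational by Cramer's rule, and `K = ρ - v₀` is a bounded set with `L K = K` for
`L = A / n`. As `|det L| = 1 / n² < 1`, the supremum of `|det (v, w)|` over `K × K` is multiplied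
by `|det L|`, hence is `0`, so `K` lies on a line through `0`. That line is an eigenline of `L`,
with eigenvalue `μ`, and `|μ| ≠ 1` because `± n` is not an eigenvalue of `A`; the same supremum
argument applied to `‖·‖` on `K` gives `K = {0}`.
-/

open Module Set Bornology
open scoped Pointwise

section Asymptotics

variable {ι E : Type*} [SeminormedAddCommGroup E] [NormedSpace ℝ E] {l : Filter ι}

lemma tendsto_inv_smul_zero_of_norm_le {m : ι → ℕ} (hm : Tendsto m l atTop) {w : ι → E} {C : ℝ}
    (hw : ∀ i, ‖w i‖ ≤ C) : Tendsto (fun i => ((m i : ℝ))⁻¹ • w i) l (𝓝 0) := by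
  have hinv : Tendsto (fun i => ((m i : ℝ))⁻¹ * C) l (𝓝 0) := by
    simpa using (tendsto_inv_atTop_zero.comp (tendsto_natCast_atTop_atTop.comp hm)).mul_const C
  refine squeeze_zero_norm (fun i => ?_) hinv
  rw [norm_smul, norm_inv, RCLike.norm_natCast]
  exact mul_le_mul_of_nonneg_left (hw i) (by positivity)

lemma tendsto_inv_smul_of_norm_sub_le {k j : ι → ℕ} (hk : ∀ i, 0 < k i) (hj : Tendsto j l atTop)
    {D : ℝ} (hkj : ∀ i, |(k i : ℝ) - j i| ≤ D) {u w : ι → E} {C : ℝ} (huw : ∀ i, ‖w i - u i‖ ≤ C)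
    {v : E} (hu : Tendsto (fun i => ((k i : ℝ))⁻¹ • u i) l (𝓝 v)) :
    Tendsto (fun i => ((j i : ℝ))⁻¹ • w i) l (𝓝 v) := by
  have hratio : Tendsto (fun i => (k i : ℝ) / j i) l (𝓝 1) := by
    have h := (tendsto_inv_smul_zero_of_norm_le hj (w := fun i => (k i : ℝ) - j i) hkj).const_add 1
    rw [add_zero] at h
    refine h.congr' ((hj.eventually_gt_atTop 0).mono fun i hi => ?_)
    dsimp only
    rw [smul_eq_mul, mul_sub, inv_mul_cancel₀ (Nat.cast_ne_zero.mpr hi.ne'), div_eq_inv_mul,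
      add_sub_cancel]
  have hsplit : ∀ i, ((j i : ℝ))⁻¹ • w i
      = ((k i : ℝ) / j i) • (((k i : ℝ))⁻¹ • u i) + ((j i : ℝ))⁻¹ • (w i - u i) := by
    intro i
    have hki : (k i : ℝ) ≠ 0 := Nat.cast_ne_zero.mpr (hk i).ne'
    rw [smul_smul, div_mul_eq_mul_div, mul_inv_cancel₀ hki, one_div, smul_sub, add_sub_cancel]
  simpa only [hsplit, one_smul, add_zero] using
    (hratio.smul hu).add (tendsto_inv_smul_zero_of_norm_le hj huw)

end Asymptotics

lemma norm_iterate_sub_le {E : Type*} [SeminormedAddCommGroup E] {G : E → E} {C : ℝ}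
    (hC : ∀ x, ‖G x - x‖ ≤ C) (k : ℕ) (x : E) : ‖G^[k] x - x‖ ≤ k * C := by
  induction k with
  | zero => simp
  | succ k ih =>
    calc ‖G^[k + 1] x - x‖ ≤ ‖G (G^[k] x) - G^[k] x‖ + ‖G^[k] x - x‖ := by
          rw [Function.iterate_succ_apply']; exact norm_sub_le_norm_sub_add_norm_sub _ _ _
      _ ≤ (k + 1 : ℕ) * C := by push_cast; linarith [hC (G^[k] x)]

lemma exists_norm_le_of_periodic {E : Type*} [SeminormedAddCommGroup E] {φ : ℝ × ℝ → E}
    (hφ : Continuous φ) (hper : ∀ (x : ℝ × ℝ) (p q : ℤ), φ (x + ((p : ℝ), (q : ℝ))) = φ x) :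
    ∃ C, ∀ x, ‖φ x‖ ≤ C := by
  obtain ⟨C, hC⟩ :=
    (isCompact_Icc (a := ((0 : ℝ), (0 : ℝ))) (b := (1, 1))).exists_bound_of_continuousOn
      hφ.continuousOn
  refine ⟨C, fun x => ?_⟩
  have hfract : φ x = φ (Int.fract x.1, Int.fract x.2) :=
    calc φ x = φ ((Int.fract x.1, Int.fract x.2) + ((⌊x.1⌋ : ℝ), (⌊x.2⌋ : ℝ))) := by
          congr 1; ext <;> simp
      _ = φ (Int.fract x.1, Int.fract x.2) := hper _ _ _
  rw [hfract]
  exact hC _ ⟨⟨Int.fract_nonneg _, Int.fract_nonneg _⟩,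
    ⟨(Int.fract_lt_one _).le, (Int.fract_lt_one _).le⟩⟩

section RotSet

variable {G G₁ G₂ : ℝ × ℝ → ℝ × ℝ} {C : ℝ}

lemma rotSet_subset_closedBall (hC : ∀ x, ‖G x - x‖ ≤ C) : rotSet G ⊆ Metric.closedBall 0 C := by
  rintro v ⟨x, m, hm, -, hlim⟩
  refine mem_closedBall_zero_iff.mpr (le_of_tendsto hlim.norm (Eventually.of_forall fun i => ?_))
  have hmi : (0 : ℝ) < m i := by exact_mod_cast hm i
  rw [norm_smul, norm_inv, RCLike.norm_natCast, inv_mul_le_iff₀ hmi]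
  exact norm_iterate_sub_le hC _ _

lemma rotSet_nonempty (hC : ∀ x, ‖G x - x‖ ≤ C) : (rotSet G).Nonempty := by
  have hball : ∀ i : ℕ,
      ((i + 1 : ℕ) : ℝ)⁻¹ • (G^[i + 1] 0 - 0) ∈ Metric.closedBall (0 : ℝ × ℝ) C := by
    intro i
    rw [mem_closedBall_zero_iff, norm_smul, norm_inv, RCLike.norm_natCast,
      inv_mul_le_iff₀ (by positivity)]
    exact norm_iterate_sub_le hC _ _
  obtain ⟨v, -, φ, hφ, hlim⟩ := tendsto_subseq_of_bounded Metric.isBounded_closedBall hball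
  exact ⟨v, fun _ => 0, fun i => φ i + 1, fun i => Nat.succ_pos _,
    (tendsto_add_atTop_nat 1).comp hφ.tendsto_atTop, by simpa [Function.comp_def] using hlim⟩

lemma image_rotSet_subset_of_semiconj {H : ℝ × ℝ → ℝ × ℝ} (h : Function.Semiconj H G₁ G₂)
    (M : (ℝ × ℝ) →L[ℝ] ℝ × ℝ) (hC : ∀ x, ‖H x - M x‖ ≤ C) : M '' rotSet G₁ ⊆ rotSet G₂ := by
  rintro _ ⟨v, ⟨x, m, hm, htop, hlim⟩, rfl⟩
  refine ⟨fun i => H (x i), m, hm, htop, tendsto_inv_smul_of_norm_sub_le hm htop (D := 0)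
    (by simp) (u := fun i => M (G₁^[m i] (x i) - x i)) (C := C + C) (fun i => ?_) ?_⟩
  · rw [← (h.iterate_right (m i)).eq, map_sub]
    calc ‖H (G₁^[m i] (x i)) - H (x i) - (M (G₁^[m i] (x i)) - M (x i))‖
        = ‖(H (G₁^[m i] (x i)) - M (G₁^[m i] (x i))) - (H (x i) - M (x i))‖ := by abel_nf
      _ ≤ C + C := (norm_sub_le _ _).trans (add_le_add (hC _) (hC _))
  · simpa only [Function.comp_def, map_smul] using (M.continuous.tendsto v).comp hlim

lemma rotSet_eq_image_of_semiconj {H : (ℝ × ℝ) ≃ₜ (ℝ × ℝ)} (h : Function.Semiconj H G₁ G₂)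
    (e : (ℝ × ℝ) ≃L[ℝ] ℝ × ℝ) (hC : ∀ x, ‖H x - e x‖ ≤ C) : rotSet G₂ = e '' rotSet G₁ := by
  refine Subset.antisymm (fun w hw => ⟨e.symm w, ?_, e.apply_symm_apply w⟩)
    (image_rotSet_subset_of_semiconj h e hC)
  have hsymm : Function.Semiconj H.symm G₂ G₁ := fun y => by
    rw [H.symm_apply_eq, h.eq, H.apply_symm_apply]
  have hCsymm : ∀ y, ‖H.symm y - e.symm y‖ ≤ ‖(e.symm : (ℝ × ℝ) →L[ℝ] ℝ × ℝ)‖ * C := fun y => by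
    obtain ⟨x, rfl⟩ := H.surjective y
    calc ‖H.symm (H x) - e.symm (H x)‖ = ‖(e.symm : (ℝ × ℝ) →L[ℝ] ℝ × ℝ) (e x - H x)‖ := by simp
      _ ≤ _ := (ContinuousLinearMap.le_opNorm _ _).trans
          (mul_le_mul_of_nonneg_left (norm_sub_rev (H x) (e x) ▸ hC x) (norm_nonneg _))
  exact image_rotSet_subset_of_semiconj hsymm (e.symm : (ℝ × ℝ) →L[ℝ] ℝ × ℝ) hCsymm ⟨w, hw, rfl⟩

lemma rotSet_add_const {P : ℝ × ℝ} (hG : Function.Commute G (· + P)) :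
    rotSet (fun x => G x + P) = (· + P) '' rotSet G := by
  have hiter : ∀ (m : ℕ) (x : ℝ × ℝ), 0 < m →
      ((m : ℝ))⁻¹ • ((fun x => G x + P)^[m] x - x) = ((m : ℝ))⁻¹ • (G^[m] x - x) + P := by
    intro m x hm
    rw [show (fun x => G x + P) = (· + P) ∘ G from rfl, hG.symm.comp_iterate, Function.comp_apply,
      add_right_iterate_apply, add_sub_right_comm, smul_add, ← Nat.cast_smul_eq_nsmul ℝ, smul_smul,
      inv_mul_cancel₀ (by positivity), one_smul]
  ext v
  simp only [rotSet, image_add_right, mem_preimage, mem_ofPred_eq]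
  refine exists_congr fun x => exists_congr fun m => and_congr_right fun hm => and_congr_right
    fun _ => ?_
  rw [← tendsto_sub_const_iff P, ← sub_eq_add_neg]
  exact tendsto_congr fun i => by rw [hiter _ _ (hm i), add_sub_cancel_right]

lemma rotSet_iterate (hC : ∀ x, ‖G x - x‖ ≤ C) {n : ℕ} (hn : 0 < n) :
    rotSet G^[n] = (n : ℝ) • rotSet G := by
  have hn' : (n : ℝ) ≠ 0 := Nat.cast_ne_zero.mpr hn.ne'
  refine Subset.antisymm (fun w ⟨x, m, hm, htop, hlim⟩ => ?_) ?_
  · refine ⟨(n : ℝ)⁻¹ • w, ⟨x, fun i => n * m i, fun i => Nat.mul_pos hn (hm i),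
      tendsto_atTop_mono (fun i => Nat.le_mul_of_pos_left _ hn) htop, ?_⟩, smul_inv_smul₀ hn' w⟩
    simpa only [← Function.iterate_mul, Nat.cast_mul, mul_inv, mul_smul] using hlim.const_smul _
  · rintro _ ⟨v, ⟨x, k, hk, htop, hlim⟩, rfl⟩
    -- `n * q i` is the least multiple of `n` exceeding `k i`.
    set q : ℕ → ℕ := fun i => k i / n + 1
    have hkq : ∀ i, k i < n * q i ∧ n * q i ≤ k i + n := fun i => by
      have := Nat.div_add_mod (k i) n; have := Nat.mod_lt (k i) hn
      constructor <;> simp only [q, Nat.mul_succ] <;> omega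
    have hq : Tendsto q atTop atTop :=
      (tendsto_add_atTop_nat 1).comp ((Nat.tendsto_div_const_atTop hn.ne').comp htop)
    have hC0 : 0 ≤ C := (norm_nonneg _).trans (hC 0)
    have hnq : Tendsto (fun i => (((n * q i : ℕ) : ℝ))⁻¹ • (G^[n * q i] (x i) - x i))
        atTop (𝓝 v) := by
      refine tendsto_inv_smul_of_norm_sub_le hk
        (tendsto_atTop_mono (fun i => Nat.le_mul_of_pos_left _ hn) hq) (D := n) (fun i => ?_)
        (C := n * C) (fun i => ?_) hlim
      · have h1 : (k i : ℝ) < n * q i := by exact_mod_cast (hkq i).1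
        have h2 : (n : ℝ) * q i ≤ k i + n := by exact_mod_cast (hkq i).2
        rw [abs_le]; push_cast; constructor <;> linarith
      · obtain ⟨hlt, hle⟩ := hkq i
        rw [← Nat.sub_add_cancel hlt.le, Function.iterate_add_apply, sub_sub_sub_cancel_right]
        calc _ ≤ ((n * q i - k i : ℕ) : ℝ) * C := norm_iterate_sub_le hC _ _
          _ ≤ n * C := mul_le_mul_of_nonneg_right (by exact_mod_cast (by omega)) hC0
    refine ⟨x, q, fun i => Nat.succ_pos _, hq, ?_⟩
    simpa only [← Function.iterate_mul, Nat.cast_mul, mul_inv, mul_smul, smul_inv_smul₀ hn'] using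
      hnq.const_smul (n : ℝ)

lemma image_rotSet_eq_of_conj_iterate_add {F H : (ℝ × ℝ) ≃ₜ (ℝ × ℝ)} {n : ℕ} (hn : 0 < n)
    {P : ℝ × ℝ} (hconj : ∀ x, H (F (H.symm x)) = F^[n] x + P) (hFP : Function.Commute F (· + P))
    (hC : ∀ x, ‖F x - x‖ ≤ C) (e : (ℝ × ℝ) ≃L[ℝ] ℝ × ℝ) {C' : ℝ} (hC' : ∀ x, ‖H x - e x‖ ≤ C') :
    e '' rotSet F = (fun s => (n : ℝ) • s + P) '' rotSet F := by
  have hsemi : Function.Semiconj H F (fun x => F^[n] x + P) := fun y => by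
    simpa using hconj (H y)
  rw [← rotSet_eq_image_of_semiconj hsemi e hC', rotSet_add_const (hFP.iterate_left n),
    rotSet_iterate hC hn, ← image_smul, image_image]

end RotSet

lemma finTwoProd_det_apply (v w : ℝ × ℝ) :
    (Basis.finTwoProd ℝ).det ![v, w] = v.1 * w.2 - v.2 * w.1 := by
  simp [Basis.det_apply, Matrix.det_fin_two, Basis.toMatrix_apply, mul_comm]

lemma eq_zero_of_image_eq_of_apply_eq_smul {X E : Type*} [NormedAddCommGroup E]
    [NormedSpace ℝ E] {K : Set X} {T : X → X} {f : X → E} {c : ℝ} (hT : T '' K = K)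
    (hf : ∀ x ∈ K, f (T x) = c • f x) (hc : |c| ≠ 1) (hb : IsBounded (f '' K)) :
    ∀ x ∈ K, f x = 0 := by
  set s := sSup ((‖f ·‖) '' K)
  have hbdd : BddAbove ((‖f ·‖) '' K) := by
    obtain ⟨C, hC⟩ := hb.exists_norm_le
    exact ⟨C, forall_mem_image.mpr fun x hx => hC _ (mem_image_of_mem f hx)⟩
  have hscale : (‖f ·‖) '' K = |c| • (‖f ·‖) '' K := by
    conv_lhs => rw [← hT, image_image]
    rw [← image_smul, image_image]
    exact image_congr fun x hx => by rw [hf x hx, norm_smul, Real.norm_eq_abs, smul_eq_mul]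
  have hs : s = |c| * s := by
    rw [← smul_eq_mul, ← Real.sSup_smul_of_nonneg (abs_nonneg c), ← hscale]
  have hs0 : s = 0 := by
    by_contra h
    exact hc (mul_right_cancel₀ h (by rw [one_mul]; exact hs.symm))
  intro x hx
  exact norm_le_zero_iff.mp (hs0 ▸ le_csSup hbdd (mem_image_of_mem _ hx))

lemma exists_smul_eq_of_det_eq_zero {u w : ℝ × ℝ} (hu : u ≠ 0)
    (h : (Basis.finTwoProd ℝ).det ![w, u] = 0) : ∃ a : ℝ, a • u = w := by
  have hdep : ¬ LinearIndependent ℝ ![w, u] := fun hli =>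
    (((Basis.finTwoProd ℝ).is_basis_iff_det).mp
      ⟨hli, hli.span_eq_top_of_card_eq_finrank' (by simp)⟩).ne_zero h
  simpa [linearIndependent_fin2, hu] using hdep

theorem eq_zero_of_isBounded_of_image_eq_self {K : Set (ℝ × ℝ)} (hK : IsBounded K)
    {L : (ℝ × ℝ) →ₗ[ℝ] ℝ × ℝ} (hKL : L '' K = K) (hdet : |LinearMap.det L| ≠ 1)
    (heig : ∀ μ : ℝ, |μ| = 1 → ¬ Module.End.HasEigenvalue L μ) : ∀ v ∈ K, v = 0 := by
  set e := Basis.finTwoProd ℝ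
  have hcross : ∀ p ∈ K ×ˢ K, e.det ![p.1, p.2] = 0 := by
    refine eq_zero_of_image_eq_of_apply_eq_smul (T := Prod.map L L) (c := LinearMap.det L)
      (by rw [prodMap_image_prod, hKL]) (fun p _ => ?_) hdet ?_
    · rw [smul_eq_mul, ← e.det_comp]
      congr 1
      funext i
      fin_cases i <;> rfl
    · have hcont : Continuous fun p : (ℝ × ℝ) × (ℝ × ℝ) => e.det ![p.1, p.2] := by
        simp only [e, finTwoProd_det_apply]
        fun_prop
      exact ((hK.prod hK).isCompact_closure.image hcont).isBounded.subset
        (image_mono subset_closure)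
  intro u hu
  by_contra hu0
  have hline : ∀ w ∈ K, ∃ a : ℝ, a • u = w := fun w hw =>
    exists_smul_eq_of_det_eq_zero hu0 (hcross (w, u) ⟨hw, hu⟩)
  obtain ⟨μ, hμ⟩ := hline (L u) (hKL ▸ mem_image_of_mem L hu)
  have hμ1 : |μ| ≠ 1 := fun h =>
    heig μ h (Module.End.hasEigenvalue_of_hasEigenvector
      ⟨Module.End.mem_eigenspace_iff.mpr hμ.symm, hu0⟩)
  refine hu0 (eq_zero_of_image_eq_of_apply_eq_smul hKL (f := id) (fun w hw => ?_) hμ1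
    (by simpa using hK) u hu)
  obtain ⟨a, rfl⟩ := hline w hw
  simp [← hμ, smul_comm μ a]

lemma image_sub_eq_self_of_image_eq {V : Type*} [AddCommGroup V] [Module ℝ V] {M : V →ₗ[ℝ] V}
    {S : Set V} {c : ℝ} (hc : c ≠ 0) {P v : V} (hMS : M '' S = (fun s => c • s + P) '' S)
    (hv : M v = c • v + P) : (c⁻¹ • M) '' ((· - v) '' S) = (· - v) '' S :=
  calc (c⁻¹ • M) '' ((· - v) '' S) = (fun t => c⁻¹ • (t - M v)) '' (M '' S) := by
        simp only [image_image, LinearMap.smul_apply, map_sub]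
    _ = (· - v) '' S := by
        rw [hMS, image_image]
        refine image_congr fun s _ => ?_
        rw [hv, add_sub_add_right_eq_sub, ← smul_sub, smul_smul, inv_mul_cancel₀ hc, one_smul]

section MatAct

variable (A : Matrix (Fin 2) (Fin 2) ℤ)

noncomputable def matActLin : (ℝ × ℝ) →ₗ[ℝ] ℝ × ℝ :=
  Matrix.toLin (Basis.finTwoProd ℝ) (Basis.finTwoProd ℝ) (A.map (↑))

@[simp]
lemma matActLin_apply (v : ℝ × ℝ) : matActLin A v = matAct A v := by
  simp [matActLin, Matrix.toLin_apply, matAct, Matrix.mulVec, dotProduct, Fin.sum_univ_two]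

lemma det_matActLin : LinearMap.det (matActLin A) = A.det := by
  simp [matActLin, LinearMap.det_toLin, Matrix.det_fin_two]

lemma matAct_add (u v : ℝ × ℝ) : matAct A (u + v) = matAct A u + matAct A v := by
  simp only [← matActLin_apply, map_add]

lemma charpoly_eval_eq (m : ℤ) :
    A.charpoly.eval m = m ^ 2 - (A 0 0 + A 1 1) * m + (A 0 0 * A 1 1 - A 0 1 * A 1 0) := by
  simp [Matrix.charpoly_fin_two, Matrix.trace_fin_two, Matrix.det_fin_two]

variable {A}

lemma charpoly_eval_eq_zero_of_matAct_eq_smul {m : ℤ} {u : ℝ × ℝ}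
    (h : matAct A u = (m : ℝ) • u) (hu : u ≠ 0) : A.charpoly.eval m = 0 := by
  obtain ⟨h1, h2⟩ := Prod.ext_iff.mp h
  simp only [matAct, Prod.smul_fst, Prod.smul_snd, smul_eq_mul] at h1 h2
  have hD : ((A.charpoly.eval m : ℤ) : ℝ) • u = 0 := by
    rw [charpoly_eval_eq]
    refine Prod.ext ?_ ?_ <;>
      simp only [Prod.smul_fst, Prod.smul_snd, Prod.fst_zero, Prod.snd_zero, smul_eq_mul] <;>
      push_cast
    · linear_combination ((A 1 1 : ℝ) - m) * h1 - (A 0 1 : ℝ) * h2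
    · linear_combination ((A 0 0 : ℝ) - m) * h2 - (A 1 0 : ℝ) * h1
  exact_mod_cast (smul_eq_zero.mp hD).resolve_right hu

lemma charpoly_eval_ne_zero (hA : IsUnit A.det) {m : ℤ} (hm : 2 ≤ |m|) :
    A.charpoly.eval m ≠ 0 := by
  intro h
  have hdvd : m ∣ A.det :=
    ⟨A 0 0 + A 1 1 - m, by rw [Matrix.det_fin_two]; linear_combination h - charpoly_eval_eq A m⟩
  have := Int.isUnit_iff_abs_eq.mp (isUnit_of_dvd_unit hdvd hA)
  omega

-- Cramer's rule for `(A - m) v = P`.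
lemma exists_rat_matAct_eq_smul_add {m : ℤ} (hm : A.charpoly.eval m ≠ 0) (P : ℤ × ℤ) :
    ∃ v : ℚ × ℚ, matAct A ((v.1 : ℝ), (v.2 : ℝ))
      = (m : ℝ) • ((v.1 : ℝ), (v.2 : ℝ)) + ((P.1 : ℝ), (P.2 : ℝ)) := by
  set D : ℤ := A.charpoly.eval m
  have hD : (D : ℝ) ≠ 0 := Int.cast_ne_zero.mpr hm
  have hDR : (D : ℝ) = ((A 0 0 : ℝ) - m) * ((A 1 1 : ℝ) - m) - (A 0 1 : ℝ) * (A 1 0 : ℝ) := by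
    simp only [D, charpoly_eval_eq]; push_cast; ring
  refine ⟨(((A 1 1 - m) * P.1 - A 0 1 * P.2 : ℤ) / D, ((A 0 0 - m) * P.2 - A 1 0 * P.1 : ℤ) / D),
    Prod.ext ?_ ?_⟩ <;>
  · simp only [matAct, Prod.smul_fst, Prod.smul_snd, Prod.fst_add, Prod.snd_add, smul_eq_mul]
    push_cast
    field_simp
    rw [hDR]
    ring

end MatAct

section ScaledMatAct

variable {A : Matrix (Fin 2) (Fin 2) ℤ} {n : ℕ}

lemma abs_det_inv_smul_matActLin_ne_one (hA : IsUnit A.det) (hn : 2 ≤ n) :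
    |LinearMap.det ((n : ℝ)⁻¹ • matActLin A)| ≠ 1 := by
  have hdet : |((A.det : ℤ) : ℝ)| = 1 := by exact_mod_cast Int.isUnit_iff_abs_eq.mp hA
  have hn2 : (2 : ℝ) ≤ n := by exact_mod_cast hn
  rw [LinearMap.det_smul, det_matActLin, abs_mul, hdet, mul_one, Module.finrank_prod,
    Module.finrank_self, abs_pow, abs_inv, Nat.abs_cast, inv_pow]
  exact (inv_lt_one_of_one_lt₀ (one_lt_pow₀ (by linarith) (by norm_num))).ne

lemma not_hasEigenvalue_inv_smul_matActLin (hA : IsUnit A.det) (hn : 2 ≤ n) {μ : ℝ}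
    (hμ : |μ| = 1) :
    ¬ Module.End.HasEigenvalue ((n : ℝ)⁻¹ • matActLin A) μ := by
  intro hev
  obtain ⟨u, hu, hu0⟩ := hev.exists_hasEigenvector
  have hAu : matAct A u = ((n * μ : ℝ)) • u := by
    have h := Module.End.mem_eigenspace_iff.mp hu
    rw [LinearMap.smul_apply, matActLin_apply, inv_smul_eq_iff₀ (by positivity)] at h
    rw [h, smul_smul]
  rcases abs_eq (zero_le_one' ℝ) |>.mp hμ with rfl | rfl
  · exact charpoly_eval_ne_zero hA (m := n) (by rw [Nat.abs_cast]; omega)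
      (charpoly_eval_eq_zero_of_matAct_eq_smul (by simpa using hAu) hu0)
  · exact charpoly_eval_ne_zero hA (m := -n) (by rw [abs_neg, Nat.abs_cast]; omega)
      (charpoly_eval_eq_zero_of_matAct_eq_smul (by simpa using hAu) hu0)

end ScaledMatAct

/-- if `F`, `H` are lifts of torus homeomorphisms `f`, `h` with
`h ∘ f ∘ h⁻¹ = fⁿ`, i.e. `H ∘ F ∘ H⁻¹ = Fⁿ + P₀` for some integer vector `P₀`, then the
rotation set of `F` is a single point with rational coordinates. -/
theorem rotation_set_is_rational_point
    (n : ℕ) (hn : 2 ≤ n)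
    (F H : (ℝ × ℝ) ≃ₜ (ℝ × ℝ)) (A : Matrix (Fin 2) (Fin 2) ℤ)
    (hA : A.det = 1 ∨ A.det = -1)
    (hF : ∀ (x : ℝ × ℝ) (p q : ℤ),
      F (x + ((p : ℝ), (q : ℝ))) = F x + ((p : ℝ), (q : ℝ)))
    (hH : ∀ (x : ℝ × ℝ) (p q : ℤ),
      H (x + ((p : ℝ), (q : ℝ))) = H x + matAct A ((p : ℝ), (q : ℝ)))
    (P₀ : ℤ × ℤ)
    (hconj : ∀ x : ℝ × ℝ,
      H (F (H.symm x)) = (⇑F)^[n] x + ((P₀.1 : ℝ), (P₀.2 : ℝ))) :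
    ∃ v : ℚ × ℚ, rotSet ⇑F = {((v.1 : ℝ), (v.2 : ℝ))} := by
  replace hA : IsUnit A.det := Int.isUnit_iff.mpr hA
  obtain ⟨C, hC⟩ := exists_norm_le_of_periodic (φ := fun x => F x - x)
    (F.continuous.sub continuous_id) fun x p q => by rw [hF, add_sub_add_right_eq_sub]
  let e := (LinearMap.equivOfIsUnitDet (f := matActLin A) (by
    rw [det_matActLin]; exact hA.map (Int.castRingHom ℝ))).toContinuousLinearEquiv
  have he : ⇑e = matActLin A := funext fun x => by simp [e]
  obtain ⟨CH, hCH⟩ := exists_norm_le_of_periodic (φ := fun x => H x - e x)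
    (H.continuous.sub e.continuous) fun x p q => by
      simp only [he, matActLin_apply, hH, matAct_add, add_sub_add_right_eq_sub]
  have hAS := image_rotSet_eq_of_conj_iterate_add (by omega) hconj (fun x => hF x _ _) hC e hCH
  rw [he] at hAS
  obtain ⟨v, hv⟩ := exists_rat_matAct_eq_smul_add (charpoly_eval_ne_zero hA (m := n)
    (by rw [Nat.abs_cast]; omega)) P₀
  set v₀ : ℝ × ℝ := ((v.1 : ℝ), (v.2 : ℝ))
  have hbdd : IsBounded ((· - v₀) '' rotSet F) := sub_singleton (b := v₀) ▸
    (Metric.isBounded_closedBall.subset (rotSet_subset_closedBall hC)).sub isBounded_singleton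
  have hK := eq_zero_of_isBounded_of_image_eq_self hbdd
    (image_sub_eq_self_of_image_eq (by positivity) hAS (by simpa using hv))
    (abs_det_inv_smul_matActLin_ne_one hA hn)
    fun μ hμ => not_hasEigenvalue_inv_smul_matActLin hA hn hμ
  have hmem : ∀ w ∈ rotSet F, w = v₀ := fun w hw => sub_eq_zero.mp (hK _ ⟨w, hw, rfl⟩)
  obtain ⟨w, hw⟩ := rotSet_nonempty hC
  exact ⟨v, eq_singleton_iff_unique_mem.mpr ⟨show v₀ ∈ rotSet F by rwa [← hmem w hw], hmem⟩⟩
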